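/- arXiv:1410.2570 — 11 statements merged into one kernel-verified Lean document; each statement's English description precedes it below -/
import Mathlib

section
/- Let Π be an N×N matrix with nonnegative entries, p̄ ≥ 0, and e, c ∈ ℝ^N. If p¹ and p² both satisfy 0 ≤ p ≤ p̄ and p ≤ Πᵀp + e + c, then the componentwise maximum p⁺ defined by p⁺_i = max(p¹_i, p²_i) also satisfies 0 ≤ p⁺ ≤ p̄ and p⁺ ≤ Πᵀp⁺ + e + c. -/
/-- If `p¹` and `p²` are both feasible payment vectors for the
Eisenberg–Noe clearing constraints with cash injection `c`, then so is their
componentwise maximum. -/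
theorem stmt_0 (N : ℕ) (A : Matrix (Fin N) (Fin N) ℝ) (hA : ∀ i j, 0 ≤ A i j)
    (pbar e c p1 p2 : Fin N → ℝ) (hpbar : ∀ i, 0 ≤ pbar i)
    (h1nn : ∀ i, 0 ≤ p1 i) (h1ub : ∀ i, p1 i ≤ pbar i)
    (h1f : ∀ i, p1 i ≤ A.transpose.mulVec p1 i + e i + c i)
    (h2nn : ∀ i, 0 ≤ p2 i) (h2ub : ∀ i, p2 i ≤ pbar i)
    (h2f : ∀ i, p2 i ≤ A.transpose.mulVec p2 i + e i + c i) :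
    (∀ i, 0 ≤ max (p1 i) (p2 i)) ∧ (∀ i, max (p1 i) (p2 i) ≤ pbar i) ∧
      (∀ i, max (p1 i) (p2 i) ≤
        A.transpose.mulVec (fun j => max (p1 j) (p2 j)) i + e i + c i) := by
  have mono : ∀ (p : Fin N → ℝ), (∀ j, p j ≤ max (p1 j) (p2 j)) →
      ∀ i, A.transpose.mulVec p i ≤
        A.transpose.mulVec (fun j => max (p1 j) (p2 j)) i := by
    intro p hp i
    simp only [Matrix.mulVec, dotProduct, Matrix.transpose_apply]
    exact Finset.sum_le_sum fun j _ => mul_le_mul_of_nonneg_left (hp j) (hA j i)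
  refine ⟨fun i => le_max_of_le_left (h1nn i),
    fun i => max_le (h1ub i) (h2ub i), fun i => ?_⟩
  rcases max_cases (p1 i) (p2 i) with ⟨h, _⟩ | ⟨h, _⟩ <;> rw [h]
  · exact (h1f i).trans (by
      have := mono p1 (fun j => le_max_left _ _) i; linarith)
  · exact (h2f i).trans (by
      have := mono p2 (fun j => le_max_right _ _) i; linarith)
end

section
/- Let Π be an N×N matrix with nonnegative entries, p̄ ≥ 0, e, c ∈ ℝ^N, and w ∈ ℝ^N with w > 0 (every component strictly positive). Then the linear program maximizing wᵀp over the set {p : 0 ≤ p ≤ p̄, p ≤ Πᵀp + e + c} has a unique maximizer. -/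
/-- the LP maximizing `wᵀp` over the Eisenberg–Noe feasible set
(with nonnegative external assets and cash injection, so the set is nonempty)
has a unique maximizer. -/
theorem stmt_1 (N : ℕ) (A : Matrix (Fin N) (Fin N) ℝ) (hA : ∀ i j, 0 ≤ A i j)
    (pbar e c w : Fin N → ℝ) (hpbar : ∀ i, 0 ≤ pbar i)
    (he : ∀ i, 0 ≤ e i) (hc : ∀ i, 0 ≤ c i) (hw : ∀ i, 0 < w i) :
    ∃! p : Fin N → ℝ,
      ((∀ i, 0 ≤ p i) ∧ (∀ i, p i ≤ pbar i) ∧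
        (∀ i, p i ≤ A.transpose.mulVec p i + e i + c i)) ∧
      ∀ q : Fin N → ℝ,
        ((∀ i, 0 ≤ q i) ∧ (∀ i, q i ≤ pbar i) ∧
          (∀ i, q i ≤ A.transpose.mulVec q i + e i + c i)) →
        ∑ i, w i * q i ≤ ∑ i, w i * p i := by
  set S : Set (Fin N → ℝ) := {p | (∀ i, 0 ≤ p i) ∧ (∀ i, p i ≤ pbar i) ∧
      (∀ i, p i ≤ A.transpose.mulVec p i + e i + c i)} with hSdef
  have hS0 : (0 : Fin N → ℝ) ∈ S := by
    refine ⟨fun i => le_rfl, fun i => hpbar i, fun i => ?_⟩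
    simp only [Matrix.mulVec_zero, Pi.zero_apply]
    have := he i; have := hc i; linarith
  have hmono : ∀ (x y : Fin N → ℝ), (∀ j, x j ≤ y j) → ∀ i,
      A.transpose.mulVec x i ≤ A.transpose.mulVec y i := by
    intro x y hxy i
    simp only [Matrix.mulVec, dotProduct, Matrix.transpose_apply]
    exact Finset.sum_le_sum fun j _ => mul_le_mul_of_nonneg_left (hxy j) (hA j i)
  have hsub : S ⊆ Set.Icc 0 pbar := fun p hp =>
    ⟨fun i => hp.1 i, fun i => hp.2.1 i⟩
  have hclosed : IsClosed S := by
    have h1 : IsClosed {p : Fin N → ℝ | ∀ i, 0 ≤ p i} := by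
      rw [Set.setOf_forall]
      exact isClosed_iInter fun i => isClosed_le continuous_const (continuous_apply i)
    have h2 : IsClosed {p : Fin N → ℝ | ∀ i, p i ≤ pbar i} := by
      rw [Set.setOf_forall]
      exact isClosed_iInter fun i => isClosed_le (continuous_apply i) continuous_const
    have h3 : IsClosed {p : Fin N → ℝ | ∀ i, p i ≤ A.transpose.mulVec p i + e i + c i} := by
      rw [Set.setOf_forall]
      refine isClosed_iInter fun i => isClosed_le (continuous_apply i) ?_
      have : Continuous fun p : Fin N → ℝ => A.transpose.mulVec p i := by
        simp only [Matrix.mulVec, dotProduct]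
        exact continuous_finset_sum _ fun j _ => continuous_const.mul (continuous_apply j)
      exact (this.add continuous_const).add continuous_const
    exact (h1.inter (h2.inter h3))
  have hcomp : IsCompact S := (isCompact_Icc).of_isClosed_subset hclosed hsub
  have hcont : Continuous fun p : Fin N → ℝ => ∑ i, w i * p i :=
    continuous_finset_sum _ fun i _ => continuous_const.mul (continuous_apply i)
  obtain ⟨p, hpS, hpmax⟩ := hcomp.exists_isMaxOn ⟨0, hS0⟩ hcont.continuousOn
  have key : ∀ p ∈ S, ∀ q ∈ S, (∀ r ∈ S, ∑ i, w i * r i ≤ ∑ i, w i * q i) →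
      ∀ i, p i ≤ q i := by
    intro p hpS q hqS hqmax
    set m : Fin N → ℝ := fun i => max (p i) (q i) with hm
    have hmS : m ∈ S := by
      refine ⟨fun i => le_trans (hpS.1 i) (le_max_left _ _),
        fun i => max_le (hpS.2.1 i) (hqS.2.1 i), fun i => ?_⟩
      refine max_le (le_trans (hpS.2.2 i) ?_) (le_trans (hqS.2.2 i) ?_)
      · have := hmono p m (fun j => le_max_left _ _) i; linarith
      · have := hmono q m (fun j => le_max_right _ _) i; linarith
    have hle : ∑ i, w i * m i ≤ ∑ i, w i * q i := hqmax m hmS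
    have hge : ∑ i, w i * q i ≤ ∑ i, w i * m i :=
      Finset.sum_le_sum fun i _ => mul_le_mul_of_nonneg_left (le_max_right _ _) (hw i).le
    have hzero : ∑ i, w i * (m i - q i) = 0 := by
      have : ∑ i, w i * m i = ∑ i, w i * q i := le_antisymm hle hge
      simp only [mul_sub]
      rw [Finset.sum_sub_distrib, this, sub_self]
    have hall : ∀ i ∈ Finset.univ, w i * (m i - q i) = 0 :=
      (Finset.sum_eq_zero_iff_of_nonneg fun i _ =>
        mul_nonneg (hw i).le (by simp [hm, sub_nonneg, le_max_right])).mp hzero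
    intro i
    have := hall i (Finset.mem_univ i)
    have hmq : m i = q i := by
      rcases mul_eq_zero.mp this with h | h
      · exact absurd h (hw i).ne'
      · linarith
    calc p i ≤ m i := le_max_left _ _
    _ = q i := hmq
  refine ⟨p, ⟨hpS, fun q hq => hpmax hq⟩, ?_⟩
  rintro q ⟨hqS, hqmax⟩
  have h1 : ∀ i, p i ≤ q i := key p hpS q hqS fun r hr => hqmax r hr
  have h2 : ∀ i, q i ≤ p i := key q hqS p hpS fun r hr => hpmax hr
  exact funext fun i => le_antisymm (h2 i) (h1 i)
end

section
/- Let Π be an N×N nonnegative matrix, p̄ ≥ 0, e, c ∈ ℝ^N, w > 0, and let p* be the maximizer of wᵀp over {p : 0 ≤ p ≤ p̄, p ≤ Πᵀp + e + c}. Then for every feasible p ≠ p*, one has p ≤ p* componentwise; that is, p* is the greatest element of the feasible set. -/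
/-- a maximizer `p*` of `wᵀp` (with `w > 0`) over the
Eisenberg–Noe feasible set dominates every other feasible point componentwise,
i.e. it is the greatest element of the feasible set. -/
theorem stmt_2 (N : ℕ) (A : Matrix (Fin N) (Fin N) ℝ) (hA : ∀ i j, 0 ≤ A i j)
    (pbar e c w pstar : Fin N → ℝ) (hpbar : ∀ i, 0 ≤ pbar i) (hw : ∀ i, 0 < w i)
    (hstar_nn : ∀ i, 0 ≤ pstar i) (hstar_ub : ∀ i, pstar i ≤ pbar i)
    (hstar_f : ∀ i, pstar i ≤ A.transpose.mulVec pstar i + e i + c i)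
    (hstar_opt : ∀ q : Fin N → ℝ,
      ((∀ i, 0 ≤ q i) ∧ (∀ i, q i ≤ pbar i) ∧
        (∀ i, q i ≤ A.transpose.mulVec q i + e i + c i)) →
      ∑ i, w i * q i ≤ ∑ i, w i * pstar i) :
    ∀ p : Fin N → ℝ,
      ((∀ i, 0 ≤ p i) ∧ (∀ i, p i ≤ pbar i) ∧
        (∀ i, p i ≤ A.transpose.mulVec p i + e i + c i)) →
      p ≠ pstar → ∀ i, p i ≤ pstar i := by
  rintro p ⟨hp_nn, hp_ub, hp_f⟩ _ i
  set q : Fin N → ℝ := fun j => max (p j) (pstar j) with hq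
  have hmono : ∀ (u v : Fin N → ℝ), (∀ j, u j ≤ v j) →
      ∀ j, A.transpose.mulVec u j ≤ A.transpose.mulVec v j := by
    intro u v huv j
    simp only [Matrix.mulVec, dotProduct, Matrix.transpose_apply]
    exact Finset.sum_le_sum fun k _ => mul_le_mul_of_nonneg_left (huv k) (hA k j)
  have hqf : ∀ j, q j ≤ A.transpose.mulVec q j + e j + c j := by
    intro j
    rcases max_cases (p j) (pstar j) with ⟨hmax, _⟩ | ⟨hmax, _⟩
    · rw [hq]; simp only [hmax]
      exact le_trans (hp_f j)
        (by gcongr; exact hmono p q (fun k => le_max_left _ _) j)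
    · rw [hq]; simp only [hmax]
      exact le_trans (hstar_f j)
        (by gcongr; exact hmono pstar q (fun k => le_max_right _ _) j)
  have hsum : ∑ j, w j * q j ≤ ∑ j, w j * pstar j :=
    hstar_opt q ⟨fun j => le_trans (hp_nn j) (le_max_left _ _),
      fun j => max_le (hp_ub j) (hstar_ub j), hqf⟩
  have hge : ∀ j, w j * pstar j ≤ w j * q j := fun j =>
    mul_le_mul_of_nonneg_left (le_max_right _ _) (hw j).le
  have heq := (Finset.sum_eq_sum_iff_of_le (fun j _ => hge j)).mp
    (le_antisymm (Finset.sum_le_sum fun j _ => hge j) hsum)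
  have : w i * pstar i = w i * q i := heq i (Finset.mem_univ i)
  have hqi : q i = pstar i := (mul_left_cancel₀ (hw i).ne' this).symm
  calc p i ≤ q i := le_max_left _ _
    _ = pstar i := hqi
end

section
/- Let Π be an N×N nonnegative matrix, p̄ ≥ 0, e, c, c' ∈ ℝ^N with c ≤ c' componentwise, and w > 0. Let p and p' denote the maximizers of wᵀx over the feasible sets {x : 0 ≤ x ≤ p̄, x ≤ Πᵀx + e + c} and {x : 0 ≤ x ≤ p̄, x ≤ Πᵀx + e + c'} respectively. Then p ≤ p' componentwise; i.e., increasing the cash injection never decreases any component of the optimal clearing payment vector. -/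
/-- monotonicity of the optimal clearing payment vector in the
cash injection: if `c ≤ c'` and `p`, `p'` are the maximizers of `wᵀx` over the
respective feasible sets, then `p ≤ p'` componentwise. -/
theorem stmt_4 (N : ℕ) (A : Matrix (Fin N) (Fin N) ℝ) (hA : ∀ i j, 0 ≤ A i j)
    (pbar e c c' w p p' : Fin N → ℝ) (hpbar : ∀ i, 0 ≤ pbar i)
    (hcc' : ∀ i, c i ≤ c' i) (hw : ∀ i, 0 < w i)
    (hp_nn : ∀ i, 0 ≤ p i) (hp_ub : ∀ i, p i ≤ pbar i)
    (hp_f : ∀ i, p i ≤ A.transpose.mulVec p i + e i + c i)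
    (hp_opt : ∀ x : Fin N → ℝ,
      (∀ i, 0 ≤ x i) → (∀ i, x i ≤ pbar i) →
      (∀ i, x i ≤ A.transpose.mulVec x i + e i + c i) →
      ∑ i, w i * x i ≤ ∑ i, w i * p i)
    (hp'_nn : ∀ i, 0 ≤ p' i) (hp'_ub : ∀ i, p' i ≤ pbar i)
    (hp'_f : ∀ i, p' i ≤ A.transpose.mulVec p' i + e i + c' i)
    (hp'_opt : ∀ x : Fin N → ℝ,
      (∀ i, 0 ≤ x i) → (∀ i, x i ≤ pbar i) →
      (∀ i, x i ≤ A.transpose.mulVec x i + e i + c' i) →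
      ∑ i, w i * x i ≤ ∑ i, w i * p' i) :
    ∀ i, p i ≤ p' i := by
  set q : Fin N → ℝ := fun i => max (p i) (p' i) with hq
  -- monotonicity of Aᵀ.mulVec
  have hmono : ∀ (x y : Fin N → ℝ), (∀ j, x j ≤ y j) →
      ∀ i, A.transpose.mulVec x i ≤ A.transpose.mulVec y i := by
    intro x y hxy i
    simp only [Matrix.mulVec, dotProduct, Matrix.transpose_apply]
    exact Finset.sum_le_sum fun j _ => mul_le_mul_of_nonneg_left (hxy j) (hA j i)
  have hqp : ∀ j, p j ≤ q j := fun j => le_max_left _ _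
  have hqp' : ∀ j, p' j ≤ q j := fun j => le_max_right _ _
  -- q is feasible for c'
  have hq_f : ∀ i, q i ≤ A.transpose.mulVec q i + e i + c' i := by
    intro i
    have h1 : p i ≤ A.transpose.mulVec q i + e i + c' i := by
      calc p i ≤ A.transpose.mulVec p i + e i + c i := hp_f i
        _ ≤ A.transpose.mulVec q i + e i + c' i := by
            have := hmono p q hqp i; have := hcc' i; linarith
    have h2 : p' i ≤ A.transpose.mulVec q i + e i + c' i := by
      calc p' i ≤ A.transpose.mulVec p' i + e i + c' i := hp'_f i
        _ ≤ A.transpose.mulVec q i + e i + c' i := by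
            have := hmono p' q hqp' i; linarith
    exact max_le h1 h2
  have hle : ∑ i, w i * q i ≤ ∑ i, w i * p' i :=
    hp'_opt q (fun i => le_trans (hp_nn i) (hqp i))
      (fun i => max_le (hp_ub i) (hp'_ub i)) hq_f
  have hge : ∀ i ∈ Finset.univ, w i * p' i ≤ w i * q i :=
    fun i _ => mul_le_mul_of_nonneg_left (hqp' i) (hw i).le
  intro i
  by_contra hne
  push_neg at hne
  have hlt : w i * p' i < w i * q i := by
    have : p' i < q i := lt_of_lt_of_le hne (hqp i)
    exact mul_lt_mul_of_pos_left this (hw i)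
  have : ∑ j, w j * p' j < ∑ j, w j * q j :=
    Finset.sum_lt_sum hge ⟨i, Finset.mem_univ i, hlt⟩
  linarith
end

section
/- Consider the star network with N = 2M nodes in which node i owes p̄_i > 0 to node M+i for i = 1,…,M, with all other liabilities zero, zero external assets (e = 0), and unit weights (w = 1), under the all-or-nothing payment mechanism. Then for any cash injection c ≥ 0 with 1ᵀc ≤ C, the reduction in total unpaid liabilities equals Σ_{i : c_i ≥ p̄_i} p̄_i restricted to fully rescued nodes, and the optimal allocation problem is equivalent to the 0-1 knapsack problem: maximize Σᵢ xᵢ p̄ᵢ subject to Σᵢ xᵢ p̄ᵢ ≤ C, xᵢ ∈ {0,1}. -/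
/-- in the star network where node `i` owes `p̄ i > 0` to node
`M + i` (zero external assets, unit weights), under the all-or-nothing payment
mechanism a debtor node pays in full iff `c i ≥ p̄ i`.  The reduction in total
unpaid liabilities equals the sum of `p̄ i` over fully rescued nodes, and the
set of achievable reductions under budget `C` coincides with the set of values
of the 0-1 knapsack problem `max Σ xᵢ p̄ᵢ s.t. Σ xᵢ p̄ᵢ ≤ C, xᵢ ∈ {0,1}`. -/
theorem stmt_6 (M : ℕ) (pbar : Fin M → ℝ) (hpbar : ∀ i, 0 < pbar i)
    (C : ℝ) (hC : 0 ≤ C)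
    (c : Fin M → ℝ) (hc_nn : ∀ i, 0 ≤ c i) (hc_budget : ∑ i, c i ≤ C)
    (p : Fin M → ℝ)
    (hp : ∀ i, p i = if pbar i ≤ c i then pbar i else 0) :
    ((∑ i, pbar i) - ∑ i, (pbar i - p i) =
        ∑ i, (if pbar i ≤ c i then pbar i else 0)) ∧
    {r : ℝ | ∃ c' : Fin M → ℝ, (∀ i, 0 ≤ c' i) ∧ (∑ i, c' i ≤ C) ∧
        r = ∑ i, (if pbar i ≤ c' i then pbar i else 0)} =
      {r : ℝ | ∃ x : Fin M → Bool,
        (∑ i, (if x i then pbar i else 0)) ≤ C ∧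
        r = ∑ i, (if x i then pbar i else 0)} := by
  constructor
  · rw [Finset.sum_sub_distrib]
    simp only [hp]
    ring
  · ext r
    simp only [Set.mem_setOf_eq]
    constructor
    · rintro ⟨c', hnn, hb, hr⟩
      refine ⟨fun i => decide (pbar i ≤ c' i), ?_, ?_⟩
      · calc ∑ i, (if decide (pbar i ≤ c' i) then pbar i else 0)
            ≤ ∑ i, c' i := by
              apply Finset.sum_le_sum
              intro i _
              by_cases h : pbar i ≤ c' i <;> simp [h, hnn i]
          _ ≤ C := hb
      · rw [hr]
        apply Finset.sum_congr rfl
        intro i _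
        by_cases h : pbar i ≤ c' i <;> simp [h]
    · rintro ⟨x, hb, hr⟩
      refine ⟨fun i => if x i then pbar i else 0, ?_, hb, ?_⟩
      · intro i; by_cases h : x i <;> simp [h, (hpbar i).le]
      · rw [hr]
        apply Finset.sum_congr rfl
        intro i _
        by_cases h : x i <;> simp [h, (hpbar i).le, not_le.mpr (hpbar i)]
end

section
/- Let Π be an N×N nonnegative matrix, p̄ ≥ 0, e, c ∈ ℝ^N, and define the map Ψ : ℝ^N → ℝ^N by Ψ_i(p) = p̄_i if Σ_j Π_{ji} p_j + e_i + c_i ≥ p̄_i, and Ψ_i(p) = 0 otherwise. Then the iteration p⁰ = p̄, p^{k+1} = Ψ(p^k) produces a componentwise nonincreasing sequence that reaches a fixed point of Ψ within N iterations. -/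
/-- the fictitious-default iteration for the all-or-nothing
payment mechanism, started at `p̄`, is componentwise nonincreasing and reaches
a fixed point of `Ψ` within `N` iterations. -/
theorem stmt_7 (N : ℕ) (A : Matrix (Fin N) (Fin N) ℝ) (hA : ∀ i j, 0 ≤ A i j)
    (pbar e c : Fin N → ℝ) (hpbar : ∀ i, 0 ≤ pbar i)
    (Psi : (Fin N → ℝ) → (Fin N → ℝ))
    (hPsi : ∀ p i, Psi p i =
      if pbar i ≤ A.transpose.mulVec p i + e i + c i then pbar i else 0)
    (seq : ℕ → Fin N → ℝ)
    (hseq0 : seq 0 = pbar) (hseq : ∀ k, seq (k + 1) = Psi (seq k)) :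
    (∀ k i, seq (k + 1) i ≤ seq k i) ∧ Psi (seq N) = seq N := by
  classical
  have hnn : ∀ p i, 0 ≤ Psi p i := by
    intro p i
    rw [hPsi]
    split
    · exact hpbar i
    · exact le_refl _
  have hle : ∀ p i, Psi p i ≤ pbar i := by
    intro p i
    rw [hPsi]
    split
    · exact le_refl _
    · exact hpbar i
  have hmono : ∀ p q, (∀ j, p j ≤ q j) → ∀ i, Psi p i ≤ Psi q i := by
    intro p q hpq i
    have hm : A.transpose.mulVec p i ≤ A.transpose.mulVec q i := by
      simp only [Matrix.mulVec, dotProduct, Matrix.transpose_apply]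
      exact Finset.sum_le_sum fun j _ => mul_le_mul_of_nonneg_left (hpq j) (hA j i)
    rw [hPsi, hPsi]
    split_ifs with h1 h2
    · exact le_refl _
    · exact absurd (le_trans h1 (by linarith)) h2
    · exact hpbar i
    · exact le_refl _
  have hdec : ∀ k, ∀ i, seq (k + 1) i ≤ seq k i := by
    intro k
    induction k with
    | zero => intro i; rw [hseq, hseq0]; exact hle pbar i
    | succ m ih =>
      intro i
      rw [hseq (m + 1)]
      exact le_of_le_of_eq (hmono _ _ ih i) (congrFun (hseq m) i).symm
  have hpos : ∀ k i, 0 ≤ seq k i := by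
    intro k i
    cases k with
    | zero => rw [hseq0]; exact hpbar i
    | succ m => rw [hseq]; exact hnn _ i
  have hrange : ∀ k i, seq k i = 0 ∨ seq k i = pbar i := by
    intro k i
    cases k with
    | zero => right; rw [hseq0]
    | succ m =>
      rw [hseq, hPsi]
      split
      · right; rfl
      · left; rfl
  set Z : ℕ → Finset (Fin N) := fun k => Finset.univ.filter (fun i => seq k i = 0) with hZ
  have hZmono : ∀ k, Z k ⊆ Z (k + 1) := by
    intro k i hi
    simp only [hZ, Finset.mem_filter, Finset.mem_univ, true_and] at hi ⊢
    have := hdec k i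
    have := hpos (k + 1) i
    linarith
  have hZstrict : ∀ k, seq (k + 1) ≠ seq k → Z k ⊂ Z (k + 1) := by
    intro k hne
    refine Finset.ssubset_iff_of_subset (hZmono k) |>.mpr ?_
    have : ∃ i, seq (k + 1) i ≠ seq k i := by
      by_contra hc
      push_neg at hc
      exact hne (funext hc)
    obtain ⟨i, hi⟩ := this
    have hlt : seq (k + 1) i < seq k i := lt_of_le_of_ne (hdec k i) hi
    have hk0 : seq k i ≠ 0 := by
      intro h0
      have := hpos (k + 1) i
      rw [h0] at hlt
      linarith
    have hk1 : seq (k + 1) i = 0 := by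
      rcases hrange (k + 1) i with h | h
      · exact h
      · rcases hrange k i with h' | h'
        · exact absurd h' hk0
        · rw [h, h'] at hlt; linarith
    refine ⟨i, ?_, ?_⟩
    · simp [hZ, hk1]
    · simp [hZ, hk0]
  have hdecK : ∀ k i, seq (k + 1) i ≤ seq k i := hdec
  refine ⟨hdecK, ?_⟩
  have hstop : ∃ k ≤ N, seq (k + 1) = seq k := by
    by_contra hc
    push_neg at hc
    have hcard : ∀ k, k ≤ N + 1 → k ≤ (Z k).card := by
      intro k
      induction k with
      | zero => intro _; exact Nat.zero_le _
      | succ m ih =>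
        intro hm
        have hmN : m ≤ N := Nat.lt_succ_iff.mp hm
        have h1 := Finset.card_lt_card (hZstrict m (hc m hmN))
        have h2 := ih (le_trans (Nat.le_succ m) hm)
        omega
    have h1 := hcard (N + 1) (le_refl _)
    have h2 : (Z (N + 1)).card ≤ N := by
      have := Finset.card_le_univ (Z (N + 1))
      simpa using this
    omega
  obtain ⟨k, hkN, heq⟩ := hstop
  have hall : ∀ m, k ≤ m → seq (m + 1) = seq m := by
    intro m hm
    induction m, hm using Nat.le_induction with
    | base => exact heq
    | succ n hn ih => rw [hseq (n + 1), ih, ← hseq n]; exact ih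
  rw [← hseq]
  exact hall N hkN
end

section
/- Let Π be an N×N nonnegative matrix, p̄, e ≥ 0 vectors in ℝ^N, and define Φ(p) = min(Πᵀp + e, p̄) componentwise. Then Φ is monotone (p ≤ q implies Φ(p) ≤ Φ(q)) and maps the order interval [0, p̄] into itself; consequently, by the Knaster–Tarski fixed point theorem, Φ has a greatest fixed point in [0, p̄], and the iteration p⁰ = p̄, p^{k+1} = Φ(p^k) produces a componentwise nonincreasing sequence whose limit is that greatest fixed point. -/
/-! The map Φ is monotone and continuous with Φ p̄ ≤ p̄, so the iterates Φᵏ p̄ decrease; being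
bounded below by 0 they converge to their infimum p*, which is a fixed point by continuity. Any
fixed point q ≤ p̄ satisfies q = Φᵏ q ≤ Φᵏ p̄ for every k, hence q ≤ p*. -/

open Filter Set Function Topology

namespace Matrix

variable {m n R : Type*} [Fintype n]

section OrderedSemiring

variable [Semiring R] [PartialOrder R] [IsOrderedRing R] {M : Matrix m n R}

theorem mulVec_mono_of_nonneg (hM : ∀ i j, 0 ≤ M i j) : Monotone (M *ᵥ ·) :=
  fun _ _ huv i => dotProduct_le_dotProduct_of_nonneg_left huv (hM i)

theorem mulVec_nonneg_of_nonneg (hM : ∀ i j, 0 ≤ M i j) {v : n → R} (hv : 0 ≤ v) :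
    0 ≤ M *ᵥ v :=
  fun i => dotProduct_nonneg_of_nonneg (hM i) hv

end OrderedSemiring

end Matrix

section IterateFromAbove

variable {α : Type*} {f : α → α} {x : α}

theorem eq_iterate_of_succ_eq {u : ℕ → α} (h0 : u 0 = x) (hsucc : ∀ k, u (k + 1) = f (u k)) :
    u = fun k => f^[k] x := by
  funext k
  induction k with
  | zero => exact h0
  | succ k ih => rw [hsucc, ih, iterate_succ_apply']

variable [ConditionallyCompleteLattice α]

theorem le_iInf_iterate_of_isFixedPt (hf : Monotone f) {q : α} (hq : IsFixedPt f q)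
    (hqx : q ≤ x) : q ≤ ⨅ k, f^[k] x :=
  le_ciInf fun k => (hq.iterate k).eq ▸ hf.iterate k hqx

variable [TopologicalSpace α] [InfConvergenceClass α]

theorem tendsto_iterate_iInf (hf : Monotone f) (hx : f x ≤ x)
    (hbdd : BddBelow (range fun k => f^[k] x)) :
    Tendsto (fun k => f^[k] x) atTop (𝓝 (⨅ k, f^[k] x)) :=
  tendsto_atTop_ciInf (hf.antitone_iterate_of_map_le hx) hbdd

end IterateFromAbove

section ClearingMap

open Matrix

variable {n R : Type*} [Fintype n] [Semiring R] [LinearOrder R]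

def clearingMap (A : Matrix n n R) (e pbar p : n → R) : n → R :=
  min (Aᵀ *ᵥ p + e) pbar

variable {A : Matrix n n R} {e pbar : n → R}

theorem continuous_clearingMap [TopologicalSpace R] [OrderClosedTopology R]
    [IsTopologicalSemiring R] : Continuous (clearingMap A e pbar) :=
  continuous_pi fun i => ((continuous_apply i).comp
    ((continuous_const.matrix_mulVec continuous_id).add continuous_const)).min continuous_const

variable [IsOrderedRing R]

theorem monotone_clearingMap (hA : ∀ i j, 0 ≤ A i j) : Monotone (clearingMap A e pbar) :=
  fun _ _ hpq =>
    inf_le_inf_right _ (add_le_add_left (mulVec_mono_of_nonneg (fun i j => hA j i) hpq) _)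

theorem mapsTo_clearingMap (hA : ∀ i j, 0 ≤ A i j) (he : 0 ≤ e) (hpbar : 0 ≤ pbar) :
    MapsTo (clearingMap A e pbar) (Icc 0 pbar) (Icc 0 pbar) :=
  fun _ hp => ⟨le_inf (add_nonneg (mulVec_nonneg_of_nonneg (fun i j => hA j i) hp.1) he) hpbar,
    inf_le_right⟩

end ClearingMap

/-- Eisenberg–Noe fixed-point characterization: the map
`Φ(p) = min(Πᵀp + e, p̄)` is monotone and maps `[0, p̄]` into itself; it has a
greatest fixed point in `[0, p̄]`, and the iteration started at `p̄` is
componentwise nonincreasing and converges to that greatest fixed point. -/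
theorem stmt_8 (N : ℕ) (A : Matrix (Fin N) (Fin N) ℝ) (hA : ∀ i j, 0 ≤ A i j)
    (pbar e : Fin N → ℝ) (hpbar : ∀ i, 0 ≤ pbar i) (he : ∀ i, 0 ≤ e i)
    (Phi : (Fin N → ℝ) → (Fin N → ℝ))
    (hPhi : ∀ p i, Phi p i = min (A.transpose.mulVec p i + e i) (pbar i)) :
    (∀ p q : Fin N → ℝ, (∀ i, p i ≤ q i) → ∀ i, Phi p i ≤ Phi q i) ∧
    (∀ p : Fin N → ℝ, (∀ i, 0 ≤ p i ∧ p i ≤ pbar i) →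
      ∀ i, 0 ≤ Phi p i ∧ Phi p i ≤ pbar i) ∧
    (∃ pg : Fin N → ℝ,
      (∀ i, 0 ≤ pg i ∧ pg i ≤ pbar i) ∧ Phi pg = pg ∧
      (∀ q : Fin N → ℝ, (∀ i, 0 ≤ q i ∧ q i ≤ pbar i) → Phi q = q →
        ∀ i, q i ≤ pg i) ∧
      (∀ seq : ℕ → Fin N → ℝ, seq 0 = pbar → (∀ k, seq (k + 1) = Phi (seq k)) →
        (∀ k i, seq (k + 1) i ≤ seq k i) ∧
        Tendsto seq atTop (nhds pg))) := by
  obtain rfl : Phi = clearingMap A e pbar := funext fun p => funext (hPhi p)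
  set Φ := clearingMap A e pbar
  have hmono : Monotone Φ := monotone_clearingMap hA
  have hmaps : MapsTo Φ (Icc 0 pbar) (Icc 0 pbar) := mapsTo_clearingMap hA he hpbar
  have hIcc : ∀ p : Fin N → ℝ, (∀ i, 0 ≤ p i ∧ p i ≤ pbar i) ↔ p ∈ Icc 0 pbar := fun _ =>
    forall_and
  have hstart : Φ pbar ≤ pbar := inf_le_right
  have hiter : ∀ k, Φ^[k] pbar ∈ Icc 0 pbar := fun k => hmaps.iterate k ⟨hpbar, le_rfl⟩
  have hbdd : BddBelow (range fun k => Φ^[k] pbar) := ⟨0, forall_mem_range.2 fun k => (hiter k).1⟩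
  have hlim := tendsto_iterate_iInf hmono hstart hbdd
  refine ⟨fun p q => @hmono p q, fun p hp => (hIcc _).2 (hmaps ((hIcc p).1 hp)), ⨅ k, Φ^[k] pbar,
    (hIcc _).2 ⟨le_ciInf fun k => (hiter k).1, ciInf_le hbdd 0⟩,
    isFixedPt_of_tendsto_iterate hlim continuous_clearingMap.continuousAt,
    fun q hq hfix => le_iInf_iterate_of_isFixedPt hmono hfix ((hIcc q).1 hq).2,
    fun seq h0 hsucc => ?_⟩
  obtain rfl := eq_iterate_of_succ_eq h0 hsucc
  exact ⟨fun k => hmono.antitone_iterate_of_map_le hstart k.le_succ, hlim⟩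
end

section
/- Let Π be an N×N nonnegative matrix, p̄ ≥ 0, e, c ∈ ℝ^N, w > 0, and let p* maximize wᵀp over {p : 0 ≤ p ≤ p̄, p ≤ Πᵀp + e + c}. Then p* is a clearing payment vector: for every i, either p*_i = p̄_i or p*_i = Σ_j Π_{ji} p*_j + e_i + c_i. -/
/-- the maximizer of `wᵀp` over the feasible set is a clearing
payment vector: every node either pays in full or pays out all of its
available funds. -/
theorem stmt_10 (N : ℕ) (A : Matrix (Fin N) (Fin N) ℝ) (hA : ∀ i j, 0 ≤ A i j)
    (pbar e c w pstar : Fin N → ℝ) (hpbar : ∀ i, 0 ≤ pbar i) (hw : ∀ i, 0 < w i)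
    (hps_nn : ∀ i, 0 ≤ pstar i) (hps_ub : ∀ i, pstar i ≤ pbar i)
    (hps_f : ∀ i, pstar i ≤ A.transpose.mulVec pstar i + e i + c i)
    (hopt : ∀ q : Fin N → ℝ,
      (∀ i, 0 ≤ q i) → (∀ i, q i ≤ pbar i) →
      (∀ i, q i ≤ A.transpose.mulVec q i + e i + c i) →
      ∑ i, w i * q i ≤ ∑ i, w i * pstar i) :
    ∀ i, pstar i = pbar i ∨
      pstar i = A.transpose.mulVec pstar i + e i + c i := by
  intro k
  by_contra h
  push_neg at h
  obtain ⟨h1, h2⟩ := h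
  have hlt1 : pstar k < pbar k := lt_of_le_of_ne (hps_ub k) h1
  have hlt2 : pstar k < A.transpose.mulVec pstar k + e k + c k :=
    lt_of_le_of_ne (hps_f k) h2
  set ε := min (pbar k - pstar k)
    (A.transpose.mulVec pstar k + e k + c k - pstar k) with hεdef
  have hε : 0 < ε := lt_min (by linarith) (by linarith)
  set q := Function.update pstar k (pstar k + ε) with hq
  have hqk : q k = pstar k + ε := by simp [hq]
  have hqj : ∀ j, pstar j ≤ q j := by
    intro j
    by_cases hj : j = k
    · subst hj; rw [hqk]; linarith
    · simp [hq, Function.update_of_ne hj]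
  have h3a : ε ≤ pbar k - pstar k := min_le_left _ _
  have h3b : ε ≤ A.transpose.mulVec pstar k + e k + c k - pstar k := min_le_right _ _
  have hmv : ∀ i, A.transpose.mulVec pstar i ≤ A.transpose.mulVec q i := by
    intro i
    simp only [Matrix.mulVec, dotProduct, Matrix.transpose_apply]
    apply Finset.sum_le_sum
    intro j _
    exact mul_le_mul_of_nonneg_left (hqj j) (hA j i)
  have hq_nn : ∀ i, 0 ≤ q i := fun i => le_trans (hps_nn i) (hqj i)
  have hq_ub : ∀ i, q i ≤ pbar i := by
    intro i
    by_cases hi : i = k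
    · subst hi; rw [hqk]; linarith
    · simp [hq, Function.update_of_ne hi]; exact hps_ub i
  have hq_f : ∀ i, q i ≤ A.transpose.mulVec q i + e i + c i := by
    intro i
    by_cases hi : i = k
    · subst hi; rw [hqk]
      have := hmv i
      linarith
    · simp only [hq, Function.update_of_ne hi]
      exact le_trans (hps_f i) (by have := hmv i; linarith)
  have hsum : ∑ i, w i * q i = (∑ i, w i * pstar i) + w k * ε := by
    have : ∀ i : Fin N, w i * q i
        = w i * pstar i + (if i = k then w k * ε else 0) := by
      intro i
      by_cases hi : i = k
      · subst hi; rw [hqk]; simp; ring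
      · simp [hq, Function.update_of_ne hi, hi]
    rw [Finset.sum_congr rfl (fun i _ => this i), Finset.sum_add_distrib,
      Finset.sum_ite_eq' Finset.univ k (fun _ => w k * ε)]
    simp
  have := hopt q hq_nn hq_ub hq_f
  rw [hsum] at this
  have : w k * ε ≤ 0 := by linarith
  nlinarith [hw k]
end

section
/- In the MILP maximizing wᵀp − sᵀd subject to 1ᵀc ≤ C, c ≥ 0, 0 ≤ p ≤ p̄, p ≤ Πᵀp + e + c, p̄_i − p_i ≤ p̄_i d_i, d_i ∈ {0,1}, with w > 0 and s > 0 and nonnegative matrix Π, any optimal p* is a clearing payment vector: for each i, either p*_i = p̄_i or p*_i = Σ_j Π_{ji} p*_j + e_i + c*_i. -/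
/-- Problem III MILP: any optimal `p*` of the mixed-integer
program is a clearing payment vector: each node either pays in full or pays
out exactly all of its available funds. -/
theorem stmt_12 (N : ℕ) (A : Matrix (Fin N) (Fin N) ℝ) (hA : ∀ i j, 0 ≤ A i j)
    (pbar e w s : Fin N → ℝ) (C : ℝ) (hpbar : ∀ i, 0 ≤ pbar i)
    (hw : ∀ i, 0 < w i) (hs : ∀ i, 0 < s i) (hC : 0 ≤ C)
    (pstar cstar dstar : Fin N → ℝ)
    (hc_budget : ∑ i, cstar i ≤ C) (hc_nn : ∀ i, 0 ≤ cstar i)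
    (hp_nn : ∀ i, 0 ≤ pstar i) (hp_ub : ∀ i, pstar i ≤ pbar i)
    (hp_f : ∀ i, pstar i ≤ A.transpose.mulVec pstar i + e i + cstar i)
    (hd_ind : ∀ i, pbar i - pstar i ≤ pbar i * dstar i)
    (hd_bin : ∀ i, dstar i = 0 ∨ dstar i = 1)
    (hopt : ∀ p c d : Fin N → ℝ,
      (∑ i, c i ≤ C) → (∀ i, 0 ≤ c i) →
      (∀ i, 0 ≤ p i) → (∀ i, p i ≤ pbar i) →
      (∀ i, p i ≤ A.transpose.mulVec p i + e i + c i) →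
      (∀ i, pbar i - p i ≤ pbar i * d i) →
      (∀ i, d i = 0 ∨ d i = 1) →
      (∑ i, w i * p i) - ∑ i, s i * d i ≤
        (∑ i, w i * pstar i) - ∑ i, s i * dstar i) :
    ∀ i, pstar i = pbar i ∨
      pstar i = A.transpose.mulVec pstar i + e i + cstar i := by
  intro k
  by_contra hne
  push_neg at hne
  obtain ⟨h1, h2⟩ := hne
  have hlt1 : pstar k < pbar k := lt_of_le_of_ne (hp_ub k) h1
  have hlt2 : pstar k < A.transpose.mulVec pstar k + e k + cstar k :=
    lt_of_le_of_ne (hp_f k) h2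
  set ε := min (pbar k - pstar k)
      (A.transpose.mulVec pstar k + e k + cstar k - pstar k) with hεdef
  have hεpos : 0 < ε := lt_min (by linarith) (by linarith)
  have hε1 : ε ≤ pbar k - pstar k := min_le_left _ _
  have hε2 : ε ≤ A.transpose.mulVec pstar k + e k + cstar k - pstar k :=
    min_le_right _ _
  set p' := Function.update pstar k (pstar k + ε) with hp'def
  have hpk : p' k = pstar k + ε := Function.update_self _ _ _
  have hpne : ∀ i, i ≠ k → p' i = pstar i := fun i hi =>
    Function.update_of_ne hi _ _
  have hle : ∀ j, pstar j ≤ p' j := by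
    intro j
    by_cases hj : j = k
    · subst hj; rw [hpk]; linarith
    · rw [hpne j hj]
  have hmono : ∀ i, A.transpose.mulVec pstar i ≤ A.transpose.mulVec p' i := by
    intro i
    simp only [Matrix.mulVec, dotProduct, Matrix.transpose_apply]
    apply Finset.sum_le_sum
    intro j _
    exact mul_le_mul_of_nonneg_left (hle j) (hA j i)
  have key := hopt p' cstar dstar hc_budget hc_nn
    (fun i => le_trans (hp_nn i) (hle i))
    (fun i => by
      by_cases hi : i = k
      · rw [hi, hpk]; linarith
      · rw [hpne i hi]; exact hp_ub i)
    (fun i => by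
      by_cases hi : i = k
      · rw [hi, hpk]
        have := hmono k
        linarith
      · rw [hpne i hi]
        have := hmono i
        have := hp_f i
        linarith)
    (fun i => le_trans (by have := hle i; linarith) (hd_ind i))
    hd_bin
  have hsum : ∑ i, w i * p' i = (∑ i, w i * pstar i) + w k * ε := by
    have h : ∀ i ∈ Finset.univ, w i * p' i
        = w i * pstar i + (if i = k then w k * ε else 0) := by
      intro i _
      by_cases hi : i = k
      · rw [hi, hpk]; simp; ring
      · rw [hpne i hi]; simp [hi]
    rw [Finset.sum_congr rfl h, Finset.sum_add_distrib,
      Finset.sum_ite_eq' Finset.univ k (fun _ => w k * ε)]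
    simp
  have : 0 < w k * ε := mul_pos (hw k) hεpos
  rw [hsum] at key
  linarith
end

section
/- Consider a full binary tree with S levels (S ≥ 2) and N = 2^S − 1 nodes, where every node at level s < S−1 owes $2^{S−s} to each of its two children, all external assets are zero, and the proportional payment mechanism is used with no cash injection. Then every non-leaf node is in default and every leaf node is solvent, so the number of defaulting nodes is 2^{S−1} − 1. -/
/-- in the full binary tree with `S ≥ 2` levels (node `n` is at
level `log₂(n+1)`; each node at level `s < S−1` owes `2^(S−s)` to each of its
two children `2n+1` and `2n+2`), with zero external assets and proportional
payments, every non-leaf node defaults and every leaf is solvent, so the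
number of defaults is `2^(S−1) − 1`. -/
theorem stmt_15 (S : ℕ) (hS : 2 ≤ S)
    (L : Fin (2 ^ S - 1) → Fin (2 ^ S - 1) → ℝ)
    (hL : ∀ n m : Fin (2 ^ S - 1),
      L n m = if (m : ℕ) = 2 * (n : ℕ) + 1 ∨ (m : ℕ) = 2 * (n : ℕ) + 2 then
        (2 : ℝ) ^ (S - Nat.log 2 ((n : ℕ) + 1)) else 0)
    (pbar : Fin (2 ^ S - 1) → ℝ) (hpbar : ∀ n, pbar n = ∑ m, L n m)
    (p : Fin (2 ^ S - 1) → ℝ)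
    (hclear : ∀ n, p n = min (pbar n)
      (∑ m, (if pbar m = 0 then 0 else L m n / pbar m) * p m)) :
    (∀ n : Fin (2 ^ S - 1), p n < pbar n ↔ (n : ℕ) < 2 ^ (S - 1) - 1) ∧
    {n : Fin (2 ^ S - 1) | p n < pbar n}.ncard = 2 ^ (S - 1) - 1 := by
  have h2S : 2 ^ S = 2 * 2 ^ (S - 1) := by
    conv_lhs => rw [show S = (S - 1) + 1 by omega]
    ring
  -- pbar is nonneg
  have hpb_nonneg : ∀ n, 0 ≤ pbar n := by
    intro n
    rw [hpbar]
    apply Finset.sum_nonneg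
    intro m _
    rw [hL]
    split <;> positivity
  -- p is identically zero
  have hp0 : ∀ v : ℕ, ∀ n : Fin (2 ^ S - 1), (n : ℕ) < v → p n = 0 := by
    intro v
    induction v with
    | zero => intro n h; omega
    | succ v ih =>
      intro n hn
      rw [hclear]
      have hsum : (∑ m, (if pbar m = 0 then 0 else L m n / pbar m) * p m) = 0 := by
        apply Finset.sum_eq_zero
        intro m _
        by_cases h0 : pbar m = 0
        · simp [h0]
        · rw [if_neg h0]
          by_cases hc : (n : ℕ) = 2 * (m : ℕ) + 1 ∨ (n : ℕ) = 2 * (m : ℕ) + 2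
          · have : (m : ℕ) < v := by omega
            rw [ih m this]; ring
          · rw [hL m n, if_neg hc]; simp
      rw [hsum, min_eq_right (hpb_nonneg n)]
  have hp0' : ∀ n : Fin (2 ^ S - 1), p n = 0 := fun n => hp0 ((n : ℕ) + 1) n (by omega)
  -- pbar positive for non-leaves
  have hpos : ∀ n : Fin (2 ^ S - 1), (n : ℕ) < 2 ^ (S - 1) - 1 → 0 < pbar n := by
    intro n hn
    have hm : 2 * (n : ℕ) + 1 < 2 ^ S - 1 := by omega
    set m₀ : Fin (2 ^ S - 1) := ⟨2 * (n : ℕ) + 1, hm⟩ with hm₀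
    have hterm : (0 : ℝ) < L n m₀ := by
      rw [hL]
      rw [if_pos (Or.inl rfl)]
      positivity
    have hle : L n m₀ ≤ pbar n := by
      rw [hpbar]
      apply Finset.single_le_sum (f := fun m => L n m) _ (Finset.mem_univ m₀)
      intro m _
      show 0 ≤ L n m
      rw [hL]
      split <;> positivity
    linarith
  -- pbar zero for leaves
  have hzero : ∀ n : Fin (2 ^ S - 1), ¬ ((n : ℕ) < 2 ^ (S - 1) - 1) → pbar n = 0 := by
    intro n hn
    rw [hpbar]
    apply Finset.sum_eq_zero
    intro m _
    rw [hL]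
    have := m.isLt
    rw [if_neg]
    omega
  have hiff : ∀ n : Fin (2 ^ S - 1), p n < pbar n ↔ (n : ℕ) < 2 ^ (S - 1) - 1 := by
    intro n
    rw [hp0' n]
    constructor
    · intro h
      by_contra hc
      rw [hzero n hc] at h
      exact lt_irrefl 0 h
    · exact hpos n
  refine ⟨hiff, ?_⟩
  have hset : {n : Fin (2 ^ S - 1) | p n < pbar n} =
      (Fin.castLE (by omega : 2 ^ (S - 1) - 1 ≤ 2 ^ S - 1)) '' Set.univ := by
    ext n
    simp only [Set.mem_setOf_eq, hiff n, Set.image_univ, Set.mem_range]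
    constructor
    · intro h
      exact ⟨⟨(n : ℕ), h⟩, by ext; simp⟩
    · rintro ⟨i, rfl⟩
      exact i.isLt
  rw [hset, Set.ncard_image_of_injective _ (Fin.castLE_injective _), Set.ncard_univ,
    Nat.card_eq_fintype_card, Fintype.card_fin]
end

section
/- Consider the network with M ≥ 1 cycles of six nodes each plus a root: the root owes $a to node n_{k1} for each k; node n_{k1} owes $2a to n_{k2}; nodes n_{k2},…,n_{k5} each owe $a to the next node in the cycle; node n_{k6} owes $a to n_{k1}; all external assets are zero and a > 0. Under the proportional payment mechanism with no cash injection, exactly the root and the M nodes n_{k1} are in default, so the total number of defaults is M + 1. -/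
/-!
The root receives nothing, so it pays `0`. Every other node owes its whole liability to its
successor in its cycle, so once the root pays nothing each non-root node receives exactly what its
cycle predecessor pays. Hence paying `a` at every non-root node is a fixed point, which lies below
the greatest one: every non-root node pays at least `a`, settling all liabilities of size `a`. The
node `n_{k1}` owes `2a` but receives only what `n_{k6}` pays, at most `a`, so it defaults.
-/

open Finset

section Clearing

variable {ι : Type*} [Fintype ι] {L : ι → ι → ℝ} {p : ι → ℝ}

noncomputable def totalLiab (L : ι → ι → ℝ) (n : ι) : ℝ := ∑ m, L n m

noncomputable def inflow (L : ι → ι → ℝ) (p : ι → ℝ) (n : ι) : ℝ :=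
  ∑ m, (if totalLiab L m = 0 then 0 else L m n / totalLiab L m) * p m

def IsClearingFixedPoint (L : ι → ι → ℝ) (p : ι → ℝ) : Prop :=
  ∀ n, p n = min (totalLiab L n) (inflow L p n)

theorem IsClearingFixedPoint.le_totalLiab (hp : IsClearingFixedPoint L p) (n : ι) :
    p n ≤ totalLiab L n :=
  (hp n).trans_le (min_le_left _ _)

theorem IsClearingFixedPoint.le_inflow (hp : IsClearingFixedPoint L p) (n : ι) :
    p n ≤ inflow L p n :=
  (hp n).trans_le (min_le_right _ _)

theorem inflow_eq_zero_of_forall {n : ι} (h : ∀ m, L m n = 0) (p : ι → ℝ) :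
    inflow L p n = 0 :=
  sum_eq_zero fun m _ => by simp [h m]

theorem inflow_eq_of_sole_debtor {d n : ι} (hd : L d n = totalLiab L d)
    (hd0 : totalLiab L d ≠ 0) (h : ∀ m ≠ d, L m n = 0 ∨ p m = 0) :
    inflow L p n = p d := by
  rw [inflow, sum_eq_single d (fun m _ hm => ?_) (by simp)]
  · rw [if_neg hd0, hd, div_self hd0, one_mul]
  · rcases h m hm with h | h <;> simp [h]

end Clearing

theorem count_eq_zero_or_mod_six_eq_one (N : ℕ) :
    Nat.count (fun n => n = 0 ∨ n % 6 = 1) (N + 1) = (N + 5) / 6 + 1 := by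
  induction N with
  | zero => simp [Nat.count_succ]
  | succ N ih =>
    rw [Nat.count_succ, ih]
    simp only [Nat.add_eq_zero_iff, one_ne_zero, and_false, false_or]
    split_ifs <;> omega

theorem ncard_setOf_fin_eq_count (N : ℕ) (P : ℕ → Prop) [DecidablePred P] :
    {n : Fin N | P n}.ncard = Nat.count P N := by
  rw [Nat.count_eq_card_filter_range, ← Set.ncard_coe_finset,
    ← Set.ncard_image_of_injective _ Fin.val_injective]
  congr 1
  ext k
  simp only [Set.mem_image, Set.mem_ofPred_eq, coe_filter, mem_range]
  constructor
  · rintro ⟨n, hn, rfl⟩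
    exact ⟨n.isLt, hn⟩
  · rintro ⟨hk, hP⟩
    exact ⟨⟨k, hk⟩, hP, rfl⟩

namespace SixCycleNetwork

variable {M : ℕ} {a : ℝ}

/-- Node `0` is the root; `n_{k,j}` is node `6k + j`. -/
def liab (M : ℕ) (a : ℝ) (n m : Fin (6 * M + 1)) : ℝ :=
  if (n : ℕ) = 0 then (if (m : ℕ) % 6 = 1 then a else 0)
  else if (n : ℕ) % 6 = 1 then (if (m : ℕ) = (n : ℕ) + 1 then 2 * a else 0)
  else if (n : ℕ) % 6 = 0 then (if (m : ℕ) + 5 = (n : ℕ) then a else 0)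
  else (if (m : ℕ) = (n : ℕ) + 1 then a else 0)

def cycleNext (n : Fin (6 * M + 1)) : Fin (6 * M + 1) :=
  ⟨if (n : ℕ) % 6 = 0 then n - 5 else n + 1, by have := n.isLt; split_ifs <;> omega⟩

def cyclePrev (n : Fin (6 * M + 1)) : Fin (6 * M + 1) :=
  ⟨if (n : ℕ) % 6 = 1 then n + 5 else n - 1, by have := n.isLt; split_ifs <;> omega⟩

def cycleDebt (a : ℝ) (n : Fin (6 * M + 1)) : ℝ := if (n : ℕ) % 6 = 1 then 2 * a else a

theorem cycleNext_eq_iff {m n : Fin (6 * M + 1)} :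
    cycleNext m = n ↔ m = cyclePrev n := by
  simp only [cycleNext, cyclePrev, Fin.ext_iff]
  split_ifs <;> omega

theorem cyclePrev_ne_zero {n : Fin (6 * M + 1)} (hn : (n : ℕ) ≠ 0) :
    (cyclePrev n : ℕ) ≠ 0 := by
  simp only [cyclePrev]
  split_ifs <;> omega

theorem cycleDebt_pos (ha : 0 < a) (n : Fin (6 * M + 1)) : 0 < cycleDebt a n := by
  unfold cycleDebt
  split_ifs <;> linarith

theorem le_cycleDebt (ha : 0 ≤ a) (n : Fin (6 * M + 1)) : a ≤ cycleDebt a n := by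
  unfold cycleDebt
  split_ifs <;> linarith

theorem liab_of_ne_zero {n : Fin (6 * M + 1)} (hn : (n : ℕ) ≠ 0) (m : Fin (6 * M + 1)) :
    liab M a n m = if cycleNext n = m then cycleDebt a n else 0 := by
  simp only [liab, cycleNext, cycleDebt, Fin.ext_iff]
  split_ifs <;> first | rfl | omega

theorem liab_zero_right (m : Fin (6 * M + 1)) : liab M a m 0 = 0 := by
  unfold liab
  split_ifs <;> first | rfl | simp_all <;> omega

theorem totalLiab_liab_of_ne_zero {n : Fin (6 * M + 1)} (hn : (n : ℕ) ≠ 0) :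
    totalLiab (liab M a) n = cycleDebt a n := by
  simp [totalLiab, liab_of_ne_zero hn]

theorem totalLiab_liab_zero_pos (hM : 1 ≤ M) (ha : 0 < a) : 0 < totalLiab (liab M a) 0 := by
  have h1 : liab M a 0 ⟨1, by omega⟩ = a := by simp [liab]
  calc 0 < liab M a 0 ⟨1, by omega⟩ := h1 ▸ ha
    _ ≤ totalLiab (liab M a) 0 :=
      single_le_sum (fun m _ => by simp only [liab]; split_ifs <;> linarith) (mem_univ _)

theorem inflow_liab (ha : 0 < a) {r : Fin (6 * M + 1) → ℝ} (hr : r 0 = 0)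
    {n : Fin (6 * M + 1)} (hn : (n : ℕ) ≠ 0) :
    inflow (liab M a) r n = r (cyclePrev n) := by
  have hd := cyclePrev_ne_zero hn
  refine inflow_eq_of_sole_debtor ?_ ?_ fun m hm => ?_
  · rw [totalLiab_liab_of_ne_zero hd, liab_of_ne_zero hd,
      if_pos (cycleNext_eq_iff.2 rfl)]
  · rw [totalLiab_liab_of_ne_zero hd]
    exact (cycleDebt_pos ha _).ne'
  · by_cases hm0 : (m : ℕ) = 0
    · obtain rfl : m = 0 := Fin.ext hm0
      exact Or.inr hr
    · exact Or.inl <| by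
        rw [liab_of_ne_zero hm0, if_neg (mt cycleNext_eq_iff.1 hm)]

def baseline (a : ℝ) (n : Fin (6 * M + 1)) : ℝ := if (n : ℕ) = 0 then 0 else a

theorem baseline_nonneg (ha : 0 ≤ a) (n : Fin (6 * M + 1)) : 0 ≤ baseline a n := by
  unfold baseline
  split_ifs <;> simp [ha]

theorem isClearingFixedPoint_baseline (hM : 1 ≤ M) (ha : 0 < a) :
    IsClearingFixedPoint (liab M a) (baseline a) := by
  intro n
  by_cases hn : (n : ℕ) = 0
  · obtain rfl : n = 0 := Fin.ext hn
    rw [inflow_eq_zero_of_forall liab_zero_right, baseline, if_pos hn,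
      min_eq_right (totalLiab_liab_zero_pos hM ha).le]
  · rw [inflow_liab ha (by simp [baseline]) hn, totalLiab_liab_of_ne_zero hn]
    simp only [baseline, if_neg hn, if_neg (cyclePrev_ne_zero hn)]
    exact (min_eq_right (le_cycleDebt ha.le n)).symm

theorem lt_totalLiab_iff (hM : 1 ≤ M) (ha : 0 < a) {p : Fin (6 * M + 1) → ℝ}
    (hp : IsClearingFixedPoint (liab M a) p) (hbase : ∀ n, baseline a n ≤ p n)
    (n : Fin (6 * M + 1)) :
    p n < totalLiab (liab M a) n ↔ (n : ℕ) = 0 ∨ (n : ℕ) % 6 = 1 := by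
  have hp0 : p 0 = 0 := le_antisymm
    ((hp.le_inflow 0).trans_eq (inflow_eq_zero_of_forall liab_zero_right p))
    (by simpa [baseline] using hbase 0)
  by_cases hn : (n : ℕ) = 0
  · obtain rfl : n = 0 := Fin.ext hn
    simp [hp0, totalLiab_liab_zero_pos hM ha]
  have ha_le : a ≤ p n := by simpa [baseline, hn] using hbase n
  rw [totalLiab_liab_of_ne_zero hn, cycleDebt]
  by_cases h1 : (n : ℕ) % 6 = 1
  · have hprev : ¬(cyclePrev n : ℕ) % 6 = 1 := by simp only [cyclePrev, if_pos h1]; omega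
    simp only [h1, if_true, or_true, iff_true]
    calc p n ≤ inflow (liab M a) p n := hp.le_inflow n
      _ = p (cyclePrev n) := inflow_liab ha hp0 hn
      _ ≤ a := (hp.le_totalLiab _).trans_eq <| by
        rw [totalLiab_liab_of_ne_zero (cyclePrev_ne_zero hn), cycleDebt, if_neg hprev]
      _ < 2 * a := by linarith
  · simp [hn, h1, ha_le]

end SixCycleNetwork

/-- in the network with a root (node `0`) and `M` six-node
cycles (nodes `n_{k,j}` numbered `1 + 6k + (j−1)`, so `n_{k,1} ≡ 1 (mod 6)`
and `n_{k,6} ≡ 0 (mod 6)`): the root owes `a` to each `n_{k,1}`; `n_{k,1}`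
owes `2a` to `n_{k,2}`; `n_{k,j}` owes `a` to `n_{k,j+1}` for `j = 2,…,5`;
`n_{k,6}` owes `a` to `n_{k,1}`; all external assets are zero.  Under the
proportional payment mechanism (clearing vector = greatest fixed point),
exactly the root and the `M` nodes `n_{k,1}` default, so there are `M + 1`
defaults. -/
theorem stmt_19 (M : ℕ) (hM : 1 ≤ M) (a : ℝ) (ha : 0 < a)
    (L : Fin (6 * M + 1) → Fin (6 * M + 1) → ℝ)
    (hL : ∀ n m : Fin (6 * M + 1),
      L n m =
        if (n : ℕ) = 0 then (if (m : ℕ) % 6 = 1 then a else 0)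
        else if (n : ℕ) % 6 = 1 then (if (m : ℕ) = (n : ℕ) + 1 then 2 * a else 0)
        else if (n : ℕ) % 6 = 0 then (if (m : ℕ) + 5 = (n : ℕ) then a else 0)
        else (if (m : ℕ) = (n : ℕ) + 1 then a else 0))
    (pbar : Fin (6 * M + 1) → ℝ) (hpbar : ∀ n, pbar n = ∑ m, L n m)
    (p : Fin (6 * M + 1) → ℝ)
    (hfix : ∀ n, p n = min (pbar n)
      (∑ m, (if pbar m = 0 then 0 else L m n / pbar m) * p m))
    (hgreatest : ∀ q : Fin (6 * M + 1) → ℝ,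
      (∀ n, q n = min (pbar n)
        (∑ m, (if pbar m = 0 then 0 else L m n / pbar m) * q m)) →
      (∀ n, 0 ≤ q n) → ∀ n, q n ≤ p n) :
    (∀ n : Fin (6 * M + 1), p n < pbar n ↔ ((n : ℕ) = 0 ∨ (n : ℕ) % 6 = 1)) ∧
    {n : Fin (6 * M + 1) | p n < pbar n}.ncard = M + 1 := by
  obtain rfl : pbar = totalLiab L := funext hpbar
  obtain rfl : L = SixCycleNetwork.liab M a := funext₂ hL
  have hbase := hgreatest _ (SixCycleNetwork.isClearingFixedPoint_baseline hM ha)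
    (SixCycleNetwork.baseline_nonneg ha.le)
  have hdefault := SixCycleNetwork.lt_totalLiab_iff hM ha hfix hbase
  refine ⟨hdefault, ?_⟩
  simp_rw [hdefault]
  calc _ = Nat.count (fun k => k = 0 ∨ k % 6 = 1) (6 * M + 1) := ncard_setOf_fin_eq_count _ _
    _ = M + 1 := by rw [count_eq_zero_or_mod_six_eq_one]; omega
end
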